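/- Let X be a simple graph, let G be a group acting on the vertex set of X by graph automorphisms, suppose the action is transitive on vertices, suppose G is generated by a set S, and suppose there exists an edge {u, v} of X such that every s ∈ S fixes u or fixes v. If X is nonempty, then X is connected. -/
import Mathlib


theorem putman_connectivity (V : Type*) (X : SimpleGraph V) (G : Type*) [Group G]
    [MulAction G V]
    (hadj : ∀ (g : G) (u v : V), X.Adj u v → X.Adj (g • u) (g • v))
    (htrans : ∀ u v : V, ∃ g : G, g • u = v)
    (S : Set G) (hS : Subgroup.closure S = ⊤)
    (u v : V) (huv : X.Adj u v)
    (hfix : ∀ s ∈ S, s • u = u ∨ s • v = v)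
    (hne : Nonempty V) :
    X.Connected := by
  -- reachability is preserved by group elements
  have hmap : ∀ (g : G) (a b : V), X.Reachable a b → X.Reachable (g • a) (g • b) := by
    intro g a b h
    exact h.map ⟨fun x => g • x, fun h => hadj g _ _ h⟩
  -- every g in the closure satisfies p g := Reachable u (g • u)
  have key : ∀ g : G, X.Reachable u (g • u) := by
    intro g
    have hg : g ∈ Subgroup.closure S := by rw [hS]; trivial
    induction hg using Subgroup.closure_induction with
    | mem s hs =>
      rcases hfix s hs with h | h
      · rw [h]
      · exact ⟨SimpleGraph.Walk.cons huv
          (SimpleGraph.Walk.cons (by simpa [h] using (hadj s u v huv).symm)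
            SimpleGraph.Walk.nil)⟩
    | one => rw [one_smul]
    | mul g h _ _ pg ph =>
      have := hmap g u (h • u) ph
      rw [smul_smul] at this
      exact pg.trans this
    | inv g _ pg =>
      have := hmap g⁻¹ u (g • u) pg
      rw [inv_smul_smul] at this
      exact this.symm
  constructor
  · intro a b
    obtain ⟨ga, hga⟩ := htrans u a
    obtain ⟨gb, hgb⟩ := htrans u b
    have := ((key ga).symm.trans (key gb))
    rwa [hga, hgb] at this
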